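/- Let (G,σ) be an sf-colored digraph with vertex set L. Then every tree on leaf set L that displays all triples of R^bin(G,σ) explains (G,σ); in particular, (G,σ) is a BMG in this case. -/

import Mathlib

/-- A rooted phylogenetic tree with leaf set `V`, encoded by its hierarchy of clusters
(the cluster of a vertex is the set of leaves below it; inner vertices of a phylogenetic
tree have at least two children, so vertices correspond bijectively to clusters). -/
structure PhyloTree (V : Type*) where
  clusters : Set (Set V)
  nonempty_of_mem : ∀ A ∈ clusters, A.Nonempty
  univ_mem : Set.univ ∈ clusters
  singleton_mem : ∀ v : V, {v} ∈ clusters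
  nested : ∀ A ∈ clusters, ∀ B ∈ clusters, A ⊆ B ∨ B ⊆ A ∨ Disjoint A B

namespace PhyloTree

variable {V : Type*}

/-- The cluster of the last common ancestor of `x` and `y`: the smallest cluster
containing both (the clusters containing `x` and `y` form a chain, so their
intersection is the smallest one). -/
def lca (T : PhyloTree V) (x y : V) : Set V :=
  ⋂₀ {A | A ∈ T.clusters ∧ x ∈ A ∧ y ∈ A}

/-- The rooted triple `xy|z` (on three pairwise distinct leaves) is displayed by `T`:
`lca(x,y) ≺ lca(x,z) = lca(y,z)`. -/
def Displays (T : PhyloTree V) (x y z : V) : Prop :=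
  x ≠ y ∧ x ≠ z ∧ y ≠ z ∧ T.lca x y ⊂ T.lca x z ∧ T.lca x z = T.lca y z

/-- `T` displays every triple of `R`; a triple `(x, y, z)` encodes `xy|z`. -/
def DisplaysSet (T : PhyloTree V) (R : Set (V × V × V)) : Prop :=
  ∀ t ∈ R, T.Displays t.1 t.2.1 t.2.2

/-- `r(T)`, the set of triples displayed by `T`. -/
def triples (T : PhyloTree V) : Set (V × V × V) :=
  {t | T.Displays t.1 t.2.1 t.2.2}

/-- `T` is binary: every inner vertex (cluster with at least two leaves) has exactly
two children, i.e. splits into two disjoint proper subclusters. -/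
def IsBinary (T : PhyloTree V) : Prop :=
  ∀ A ∈ T.clusters, 1 < A.ncard →
    ∃ B ∈ T.clusters, ∃ D ∈ T.clusters,
      Disjoint B D ∧ B ∪ D = A ∧ B ⊂ A ∧ D ⊂ A

/-- `T'` is a refinement of `T`: they have the same leaf set and `T` is obtained from
`T'` by contracting inner edges, i.e. every cluster of `T` is a cluster of `T'`. -/
def Refines (T' T : PhyloTree V) : Prop :=
  T.clusters ⊆ T'.clusters

end PhyloTree

section BMG

variable {V C : Type*}

/-- `y` is a best match of `x` in the leaf-colored tree `(T,σ)`. -/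
def bestMatch (T : PhyloTree V) (σ : V → C) (x y : V) : Prop :=
  σ x ≠ σ y ∧ ∀ y' : V, σ y' = σ y → T.lca x y ⊆ T.lca x y'

/-- The leaf-colored tree `(T,σ)` explains the vertex-colored digraph `(E,σ)`,
i.e. `(E,σ)` is the best match graph of `(T,σ)`. -/
def Explains (T : PhyloTree V) (σ : V → C) (E : V → V → Prop) : Prop :=
  ∀ x y, E x y ↔ bestMatch T σ x y

/-- `(E,σ)` is a best match graph. -/
def IsBMG (E : V → V → Prop) (σ : V → C) : Prop :=
  ∃ T : PhyloTree V, Explains T σ E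

/-- `(E,σ)` is binary-explainable. -/
def BinaryExplainable (E : V → V → Prop) (σ : V → C) : Prop :=
  ∃ T : PhyloTree V, T.IsBinary ∧ Explains T σ E

/-- The informative triples `R(G,σ)`: `(a,b,b')` encodes `ab|b'`. -/
def informativeTriples (E : V → V → Prop) (σ : V → C) : Set (V × V × V) :=
  {t | σ t.1 ≠ σ t.2.1 ∧ σ t.2.1 = σ t.2.2 ∧ E t.1 t.2.1 ∧ ¬ E t.1 t.2.2}

/-- The forbidden triples `F(G,σ)`: `(a,b,b')` encodes `ab|b'`. -/
def forbiddenTriples (E : V → V → Prop) (σ : V → C) : Set (V × V × V) :=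
  {t | σ t.1 ≠ σ t.2.1 ∧ σ t.2.1 = σ t.2.2 ∧ t.2.1 ≠ t.2.2 ∧ E t.1 t.2.1 ∧ E t.1 t.2.2}

/-- The extended triple set `R^bin(G,σ) = R(G,σ) ∪ {bb'|a : ab|b' ∈ F(G,σ)}`. -/
def Rbin (E : V → V → Prop) (σ : V → C) : Set (V × V × V) :=
  informativeTriples E σ ∪ {t | (t.2.2, t.1, t.2.1) ∈ forbiddenTriples E σ}

/-- Properly colored: arcs only between vertices of distinct colors. -/
def ProperlyColored (E : V → V → Prop) (σ : V → C) : Prop :=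
  ∀ x y, E x y → σ x ≠ σ y

/-- sf-colored: properly colored and every vertex has, for each color (of the graph)
different from its own, at least one out-neighbor of that color. -/
def SfColored (E : V → V → Prop) (σ : V → C) : Prop :=
  ProperlyColored E σ ∧ ∀ x y : V, σ y ≠ σ x → ∃ z, E x z ∧ σ z = σ y

/-- A triple set is consistent if some tree displays all of its triples. -/
def Consistent (R : Set (V × V × V)) : Prop :=
  ∃ T : PhyloTree V, T.DisplaysSet R

/-- The closure `cl(R)`: all triples displayed by every tree displaying `R`. -/
def tripleClosure (R : Set (V × V × V)) : Set (V × V × V) :=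
  {t | ∀ T : PhyloTree V, T.DisplaysSet R → T.Displays t.1 t.2.1 t.2.2}

/-- `(T,σ)` is a least resolved tree for `(E,σ)`: it explains `(E,σ)` and no tree
obtained from it by contracting an edge (i.e. by removing a non-root inner cluster)
explains `(E,σ)`. -/
def IsLRT (T : PhyloTree V) (σ : V → C) (E : V → V → Prop) : Prop :=
  Explains T σ E ∧
    ∀ A ∈ T.clusters, A ≠ Set.univ → 1 < A.ncard →
      ∀ T' : PhyloTree V, T'.clusters = T.clusters \ {A} → ¬ Explains T' σ E

end BMG

section Aho

variable {V : Type*}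

/-- Adjacency in the Aho graph `[R,L]`: `x` and `y` are joined whenever `xy|z ∈ R`
for some `z ∈ L` (only triples with all leaves in `L` are taken into account). -/
def ahoAdj (R : Set (V × V × V)) (L : Set V) (x y : V) : Prop :=
  x ∈ L ∧ y ∈ L ∧ ∃ z ∈ L, (x, y, z) ∈ R ∨ (y, x, z) ∈ R

/-- The vertex set of the connected component of `x` in the Aho graph `[R,L]`. -/
def ahoComponent (R : Set (V × V × V)) (L : Set V) (x : V) : Set V :=
  {y | Relation.ReflTransGen (ahoAdj R L) x y}

/-- The clusters of the Aho tree `Aho(R, V)`: the full leaf set, and recursively the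
connected components of the Aho graphs. -/
inductive IsAhoCluster (R : Set (V × V × V)) : Set V → Prop
  | univ : IsAhoCluster R Set.univ
  | component {L : Set V} {x : V} :
      IsAhoCluster R L → x ∈ L → IsAhoCluster R (ahoComponent R L x)

/-- `T` is the Aho tree (`BUILD` tree) of the triple set `R` on the full leaf set. -/
def IsAhoTree (R : Set (V × V × V)) (T : PhyloTree V) : Prop :=
  T.clusters = {A | IsAhoCluster R A}

/-- The union of the leaf sets of the triples in `R`. -/
def tripleLeaves (R : Set (V × V × V)) : Set V :=
  {v | ∃ t ∈ R, v = t.1 ∨ v = t.2.1 ∨ v = t.2.2}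

end Aho

/-!
An arc `x → y` is a best match: for `y'` of the color of `y`, either `x → y'` is not an arc
and the informative triple `xy|y'` puts `lca(x,y)` strictly below `lca(x,y')`, or `xy|y'`
is forbidden and the triple `yy'|x` of `R^bin` gives `lca(x,y) = lca(x,y')`. Conversely, if
`y` is a best match of `x` but `x → y` is missing, sf-coloring provides an arc `x → z` with
`σ z = σ y`, and the informative triple `xz|y` contradicts the minimality of `lca(x,y)`.
-/

namespace PhyloTree

variable {V : Type*}

theorem lca_comm (T : PhyloTree V) (x y : V) : T.lca x y = T.lca y x := by
  simp only [lca, and_comm]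

theorem Displays.lca_ssubset {T : PhyloTree V} {x y z : V} (h : T.Displays x y z) :
    T.lca x y ⊂ T.lca x z :=
  h.2.2.2.1

theorem Displays.lca_outgroup_eq {T : PhyloTree V} {x y z : V} (h : T.Displays x y z) :
    T.lca z x = T.lca z y := by
  rw [lca_comm T z x, lca_comm T z y]
  exact h.2.2.2.2

end PhyloTree

section Rbin

variable {V C : Type*} {E : V → V → Prop} {σ : V → C} {T : PhyloTree V}

theorem bestMatch_of_displaysSet_Rbin (hprop : ProperlyColored E σ)
    (hT : T.DisplaysSet (Rbin E σ)) {x y : V} (hxy : E x y) : bestMatch T σ x y := by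
  refine ⟨hprop x y hxy, fun y' hy' => ?_⟩
  by_cases hyy' : y' = y
  · rw [hyy']
  by_cases hxy' : E x y'
  · have hforbidden : (y, y', x) ∈ Rbin E σ :=
      Or.inr ⟨hprop x y hxy, hy'.symm, Ne.symm hyy', hxy, hxy'⟩
    exact (hT _ hforbidden).lca_outgroup_eq.subset
  · have hinformative : (x, y, y') ∈ Rbin E σ :=
      Or.inl ⟨hprop x y hxy, hy'.symm, hxy, hxy'⟩
    exact (hT _ hinformative).lca_ssubset.subset

theorem edge_of_bestMatch_of_displaysSet_Rbin
    (hout : ∀ x y : V, σ y ≠ σ x → ∃ z, E x z ∧ σ z = σ y)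
    (hT : T.DisplaysSet (Rbin E σ)) {x y : V} (hbm : bestMatch T σ x y) : E x y := by
  obtain ⟨hne, hmin⟩ := hbm
  by_contra hxy
  obtain ⟨z, hxz, hz⟩ := hout x y (Ne.symm hne)
  have hinformative : (x, z, y) ∈ Rbin E σ :=
    Or.inl ⟨hz ▸ hne, hz, hxz, hxy⟩
  exact (hT _ hinformative).lca_ssubset.not_subset (hmin z hz)

theorem explains_of_displaysSet_Rbin (hsf : SfColored E σ)
    (hT : T.DisplaysSet (Rbin E σ)) : Explains T σ E := fun _ _ =>
  ⟨bestMatch_of_displaysSet_Rbin hsf.1 hT, edge_of_bestMatch_of_displaysSet_Rbin hsf.2 hT⟩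

end Rbin

theorem stmt2_general {V C : Type*} (E : V → V → Prop) (σ : V → C)
    (hsf : SfColored E σ) :
    (∀ T : PhyloTree V, T.DisplaysSet (Rbin E σ) → Explains T σ E) ∧
      ((∃ T : PhyloTree V, T.DisplaysSet (Rbin E σ)) → IsBMG E σ) :=
  ⟨fun _ hT => explains_of_displaysSet_Rbin hsf hT,
    fun ⟨T, hT⟩ => ⟨T, explains_of_displaysSet_Rbin hsf hT⟩⟩

/-- Lemma: Rbin-explains-BMG.
Let `(G,σ)` be an sf-colored digraph with vertex set `L`. Then every tree on leaf set
`L` that displays all triples of `R^bin(G,σ)` explains `(G,σ)`; in particular,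
`(G,σ)` is a BMG in this case. -/
theorem stmt2 {V C : Type*} [Fintype V] (E : V → V → Prop) (σ : V → C)
    (hsf : SfColored E σ) :
    (∀ T : PhyloTree V, T.DisplaysSet (Rbin E σ) → Explains T σ E) ∧
      ((∃ T : PhyloTree V, T.DisplaysSet (Rbin E σ)) → IsBMG E σ) :=
  stmt2_general E σ hsf
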